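/- arXiv:1106.4751 — 5 statements merged into one kernel-verified Lean document; each statement's English description precedes it below -/
import Mathlib

section
/- Let 0 < η, let C ∈ ℂ, and let u : (0,∞) → ℂ be measurable with u(x) = C for a.e. x ∈ (0, η], and suppose u has rapid decrease at infinity: for every N ≥ 0 there is C_N with |u(x)| ≤ C_N x^{−N} for x ≥ η. Then there exists a function F analytic on ℂ∖{1} such that: (i) F(s) = ∫_0^∞ u(x) x^{−s} dx for every s with Re(s) < 1 (the integral converging absolutely there); (ii) F(s) = ∫_η^∞ (u(x) − C) x^{−s} dx for every s with Re(s) > 1 (the integral converging absolutely there); and (iii) F has at worst a simple pole at s = 1 with lim_{s→1} (s−1)·F(s) = −C. -/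
open MeasureTheory Set Complex Filter Real
noncomputable section

/-! Split the integral at `η`. On `(η, ∞)` the transform `G(s) = ∫_η^∞ u(x) x^{-s} dx` converges
for every `s` by rapid decay, and is entire, being the Mellin transform `mellin (𝟙_{(η,∞)} u) (1 - s)`
of a function vanishing near `0`. On `(0, η]` the integrand is `C x^{-s}`, which integrates to
`C η^{1-s}/(1-s)` when `Re s < 1`. Hence `F(s) = G(s) + C η^{1-s}/(1-s)` is analytic off `s = 1`,
agrees with the Mellin integral for `Re s < 1`, and has residue `-C` at `1`. For `Re s > 1`,
`∫_η^∞ C x^{-s} dx = -C η^{1-s}/(1-s)` gives the second formula. -/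

open Asymptotics Topology

section MellinOfRapidDecay

variable {E : Type*} [NormedAddCommGroup E]

theorem isBigO_rpow_atTop_of_forall_nat_bound {u : ℝ → E} {η : ℝ}
    (h : ∀ N : ℕ, ∃ CN : ℝ, ∀ x : ℝ, η ≤ x → ‖u x‖ ≤ CN * x ^ (-(N : ℝ))) (a : ℝ) :
    u =O[atTop] fun x : ℝ => x ^ (-a) := by
  obtain ⟨CN, hCN⟩ := h ⌈a⌉₊
  refine IsBigO.of_bound |CN| ?_
  filter_upwards [eventually_ge_atTop η, eventually_ge_atTop 1] with x hxη hx1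
  have hx0 : 0 ≤ x := zero_le_one.trans hx1
  calc ‖u x‖ ≤ CN * x ^ (-(⌈a⌉₊ : ℝ)) := hCN x hxη
    _ ≤ |CN| * x ^ (-a) :=
        mul_le_mul (le_abs_self _) (rpow_le_rpow_of_exponent_le hx1 (neg_le_neg (Nat.le_ceil a)))
          (rpow_nonneg hx0 _) (abs_nonneg _)
    _ = |CN| * ‖x ^ (-a)‖ := by rw [norm_of_nonneg (rpow_nonneg hx0 _)]

variable [NormedSpace ℂ E]

theorem mellinConvergent_of_eventuallyEq_zero_of_isBigO_rpow {f : ℝ → E}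
    (hf : LocallyIntegrableOn f (Ioi 0)) (hbot : f =ᶠ[𝓝[>] 0] 0)
    (htop : ∀ a : ℝ, f =O[atTop] fun x : ℝ => x ^ (-a)) (s : ℂ) :
    MellinConvergent f s :=
  mellinConvergent_of_isBigO_rpow hf (htop (s.re + 1)) (lt_add_one _)
    (hbot.trans_isBigO (isBigO_zero _ _)) (sub_one_lt _)

theorem differentiable_mellin_of_eventuallyEq_zero_of_isBigO_rpow {f : ℝ → E}
    (hf : LocallyIntegrableOn f (Ioi 0)) (hbot : f =ᶠ[𝓝[>] 0] 0)
    (htop : ∀ a : ℝ, f =O[atTop] fun x : ℝ => x ^ (-a)) :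
    Differentiable ℂ (mellin f) := fun s =>
  mellin_differentiableAt_of_isBigO_rpow hf (htop (s.re + 1)) (lt_add_one _)
    (hbot.trans_isBigO (isBigO_zero _ _)) (sub_one_lt _)

theorem mellinConvergent_indicator_Ioi_iff (f : ℝ → E) {η : ℝ} (hη : 0 ≤ η) (s : ℂ) :
    MellinConvergent ((Ioi η).indicator f) s ↔
      IntegrableOn (fun x : ℝ => (x : ℂ) ^ (s - 1) • f x) (Ioi η) := by
  rw [MellinConvergent, ← indicator_smul, IntegrableOn, integrable_indicator_iff measurableSet_Ioi,
    IntegrableOn, Measure.restrict_restrict measurableSet_Ioi, inter_eq_left.2 (Ioi_subset_Ioi hη)]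
  rfl

theorem mellin_indicator_Ioi (f : ℝ → E) {η : ℝ} (hη : 0 ≤ η) (s : ℂ) :
    mellin ((Ioi η).indicator f) s = ∫ x in Ioi η, (x : ℂ) ^ (s - 1) • f x := by
  rw [mellin, ← indicator_smul, setIntegral_indicator measurableSet_Ioi,
    inter_eq_right.2 (Ioi_subset_Ioi hη)]

theorem exists_differentiable_eq_integral_Ioi_cpow_neg_smul {u : ℝ → E} {η : ℝ} (hη : 0 < η)
    (hu : AEStronglyMeasurable u)
    (hdecay : ∀ N : ℕ, ∃ CN : ℝ, ∀ x : ℝ, η ≤ x → ‖u x‖ ≤ CN * x ^ (-(N : ℝ))) :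
    ∃ G : ℂ → E, Differentiable ℂ G ∧ ∀ s : ℂ,
      IntegrableOn (fun x : ℝ => (x : ℂ) ^ (-s) • u x) (Ioi η) ∧
        G s = ∫ x in Ioi η, (x : ℂ) ^ (-s) • u x := by
  set v := (Ioi η).indicator u
  have hv_top : ∀ a : ℝ, v =O[atTop] fun x : ℝ => x ^ (-a) := fun a =>
    (isBigO_of_le _ (norm_indicator_le_norm_self u)).trans
      (isBigO_rpow_atTop_of_forall_nat_bound hdecay a)
  have hv_bot : v =ᶠ[𝓝[>] 0] 0 := by
    filter_upwards [Ioo_mem_nhdsGT hη] with x hx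
    exact indicator_of_notMem (notMem_Ioi.2 hx.2.le) u
  have hv_loc : LocallyIntegrableOn v (Ioi 0) := by
    obtain ⟨C0, hC0⟩ := hdecay 0
    have hbound : ∀ x, ‖v x‖ ≤ C0 := fun x => by
      by_cases hx : x ∈ Ioi η
      · simpa [v, indicator_of_mem hx] using hC0 x (le_of_lt hx)
      · simpa [v, indicator_of_notMem hx] using (norm_nonneg _).trans (hC0 η le_rfl)
    exact ((memLp_top_of_bound (hu.indicator measurableSet_Ioi) C0
      (Eventually.of_forall hbound)).locallyIntegrable le_top).locallyIntegrableOn _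
  refine ⟨fun s => mellin v (1 - s),
    (differentiable_mellin_of_eventuallyEq_zero_of_isBigO_rpow hv_loc hv_bot hv_top).comp
      ((differentiable_const 1).sub differentiable_id), fun s => ⟨?_, ?_⟩⟩
  · simpa only [sub_sub_cancel_left] using (mellinConvergent_indicator_Ioi_iff u hη.le (1 - s)).1
      (mellinConvergent_of_eventuallyEq_zero_of_isBigO_rpow hv_loc hv_bot hv_top _)
  · simp only [v, mellin_indicator_Ioi u hη.le, sub_sub_cancel_left]

end MellinOfRapidDecay

theorem integrableOn_Ioc_zero_cpow_neg {s : ℂ} (hs : s.re < 1) (η : ℝ) :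
    IntegrableOn (fun x : ℝ => (x : ℂ) ^ (-s)) (Ioc 0 η) :=
  (intervalIntegral.intervalIntegrable_cpow' (by rw [neg_re]; linarith)).1

theorem integral_Ioc_zero_cpow_neg {s : ℂ} (hs : s.re < 1) {η : ℝ} (hη : 0 ≤ η) :
    ∫ x in Ioc 0 η, (x : ℂ) ^ (-s) = (η : ℂ) ^ (1 - s) / (1 - s) := by
  have h1s : 1 - s ≠ 0 := fun h => by rw [← sub_eq_zero.1 h, one_re] at hs; exact hs.false
  rw [← intervalIntegral.integral_of_le hη, integral_cpow (Or.inl (by rw [neg_re]; linarith)),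
    neg_add_eq_sub, ofReal_zero, zero_cpow h1s, sub_zero]

theorem integral_Ioi_cpow_neg {s : ℂ} (hs : 1 < s.re) {η : ℝ} (hη : 0 < η) :
    ∫ x in Ioi η, (x : ℂ) ^ (-s) = -(η : ℂ) ^ (1 - s) / (1 - s) := by
  rw [integral_Ioi_cpow_of_lt (by rw [neg_re]; linarith) hη, neg_add_eq_sub]

theorem integrableOn_Ioc_zero_mul_cpow_neg_of_ae_eq_const {u : ℝ → ℂ} {η : ℝ} (hη : 0 ≤ η)
    {C : ℂ} (huc : ∀ᵐ x ∂volume.restrict (Ioc 0 η), u x = C) {s : ℂ} (hs : s.re < 1) :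
    IntegrableOn (fun x : ℝ => u x * (x : ℂ) ^ (-s)) (Ioc 0 η) ∧
      ∫ x in Ioc 0 η, u x * (x : ℂ) ^ (-s) = C * (η : ℂ) ^ (1 - s) / (1 - s) := by
  have hae : (fun x : ℝ => C * (x : ℂ) ^ (-s)) =ᵐ[volume.restrict (Ioc 0 η)]
      fun x => u x * (x : ℂ) ^ (-s) := huc.mono fun x hx => congrArg (· * (x : ℂ) ^ (-s)) hx.symm
  refine ⟨((integrableOn_Ioc_zero_cpow_neg hs η).const_mul C).congr hae, ?_⟩
  rw [← integral_congr_ae hae, integral_const_mul, integral_Ioc_zero_cpow_neg hs hη, mul_div_assoc]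

theorem analyticOnNhd_add_mul_cpow_div_one_sub {G : ℂ → ℂ} (hG : Differentiable ℂ G) {c : ℂ}
    (hc : c ≠ 0) (C : ℂ) :
    AnalyticOnNhd ℂ (fun s => G s + C * c ^ (1 - s) / (1 - s)) {1}ᶜ := by
  refine DifferentiableOn.analyticOnNhd (fun s hs => ?_) isOpen_compl_singleton
  have h1s : 1 - s ≠ 0 := sub_ne_zero.2 (Ne.symm hs)
  have hlin : DifferentiableAt ℂ (fun s : ℂ => 1 - s) s :=
    (differentiableAt_const 1).sub differentiableAt_id
  exact ((hG s).add (((differentiableAt_const C).mul (hlin.const_cpow (Or.inl hc))).div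
    hlin h1s)).differentiableWithinAt

theorem tendsto_sub_one_mul_add_mul_cpow_div_one_sub {G : ℂ → ℂ} (hG : ContinuousAt G 1)
    {c : ℂ} (hc : c ≠ 0) (C : ℂ) :
    Tendsto (fun s => (s - 1) * (G s + C * c ^ (1 - s) / (1 - s))) (𝓝[≠] 1) (𝓝 (-C)) := by
  have hcont : ContinuousAt (fun s : ℂ => (s - 1) * G s - C * c ^ (1 - s)) 1 :=
    ((continuousAt_id.sub continuousAt_const).mul hG).sub (continuousAt_const.mul
      ((continuous_const.sub continuous_id).const_cpow (Or.inl hc)).continuousAt)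
  have hlim := hcont.continuousWithinAt (s := {1}ᶜ).tendsto
  simp only [sub_self, zero_mul, cpow_zero, mul_one, zero_sub] at hlim
  refine hlim.congr' ?_
  filter_upwards [self_mem_nhdsWithin] with s hs
  have h1s : 1 - s ≠ 0 := sub_ne_zero.2 (Ne.symm hs)
  field_simp
  ring

/-- Let `u` be measurable on `(0,∞)`, a.e. equal to the constant `C` on
`(0,η]`, with rapid decrease at infinity. Then the Mellin transform of `u` extends to an
analytic function `F` on `ℂ∖{1}` with: (i) `F(s) = ∫_0^∞ u(x)x^{-s} dx` (absolutely
convergent) for `Re s < 1`; (ii) `F(s) = ∫_η^∞ (u(x)−C)x^{-s} dx` (absolutely convergent)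
for `Re s > 1`; (iii) at worst a simple pole at `s = 1` with `lim_{s→1}(s−1)F(s) = −C`. -/
theorem stmt8 (η : ℝ) (hη : 0 < η) (C : ℂ) (u : ℝ → ℂ) (hum : Measurable u)
    (huc : ∀ᵐ x ∂volume.restrict (Ioc (0:ℝ) η), u x = C)
    (hdecay : ∀ N : ℕ, ∃ CN : ℝ, ∀ x : ℝ, η ≤ x → ‖u x‖ ≤ CN * x ^ (-(N:ℝ))) :
    ∃ F : ℂ → ℂ, AnalyticOnNhd ℂ F {(1:ℂ)}ᶜ ∧
      (∀ s : ℂ, s.re < 1 → IntegrableOn (fun x : ℝ => u x * (x:ℂ) ^ (-s)) (Ioi 0) volume ∧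
        F s = ∫ x in Ioi (0:ℝ), u x * (x:ℂ) ^ (-s)) ∧
      (∀ s : ℂ, 1 < s.re →
        IntegrableOn (fun x : ℝ => (u x - C) * (x:ℂ) ^ (-s)) (Ioi η) volume ∧
        F s = ∫ x in Ioi η, (u x - C) * (x:ℂ) ^ (-s)) ∧
      Tendsto (fun s : ℂ => (s - 1) * F s) (nhdsWithin 1 {(1:ℂ)}ᶜ) (nhds (-C)) := by
  obtain ⟨G, hG, hGint⟩ :=
    exists_differentiable_eq_integral_Ioi_cpow_neg_smul hη hum.aestronglyMeasurable hdecay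
  have htail : ∀ s : ℂ, IntegrableOn (fun x : ℝ => u x * (x : ℂ) ^ (-s)) (Ioi η) ∧
      G s = ∫ x in Ioi η, u x * (x : ℂ) ^ (-s) := by
    simpa only [smul_eq_mul, mul_comm] using hGint
  have hηC : (η : ℂ) ≠ 0 := ofReal_ne_zero.2 hη.ne'
  refine ⟨fun s => G s + C * (η : ℂ) ^ (1 - s) / (1 - s),
    analyticOnNhd_add_mul_cpow_div_one_sub hG hηC C, fun s hs => ?_, fun s hs => ?_,
    tendsto_sub_one_mul_add_mul_cpow_div_one_sub hG.continuous.continuousAt hηC C⟩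
  · obtain ⟨hhead, hhead_eq⟩ := integrableOn_Ioc_zero_mul_cpow_neg_of_ae_eq_const hη.le huc hs
    rw [← Ioc_union_Ioi_eq_Ioi hη.le, setIntegral_union (Ioc_disjoint_Ioi le_rfl)
      measurableSet_Ioi hhead (htail s).1, hhead_eq, ← (htail s).2, add_comm]
    exact ⟨hhead.union (htail s).1, rfl⟩
  · have hpow := (integrableOn_Ioi_cpow_of_lt (by rw [neg_re]; linarith) hη).const_mul C
    simp only [sub_mul]
    refine ⟨(htail s).1.sub hpow, ?_⟩
    rw [integral_sub (htail s).1 hpow, integral_const_mul, integral_Ioi_cpow_neg hs hη, ← (htail s).2]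
    ring
end
end

section
/- Let v ∈ L²((0,∞), dx) with v = 0 a.e. on (0,1), and set G(s) = ∫_1^∞ v(x) x^{−s} dx, which converges absolutely for Re(s) > 1. Then for every Z ∈ ℂ with Re(Z) = 1/2: ∫_ℝ G(3/2 + it) / (Z − (3/2 + it)) dt = 0. -/
/-!
Substituting `x = eᵘ` turns `G(3/2 + it)` into the Fourier transform, at `t / 2π`, of the
integrable function `w(u) = e^{-u/2} v(eᵘ)` supported on `u > 0`, while `1 / (Z - 3/2 - it)` is
the Fourier transform of `k(u) = -e^{(Z - 3/2) u}` on `u > 0` (and `0` elsewhere), which is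
bounded and integrable because `Re (Z - 3/2) = -1`. So the integrand is the Fourier transform of
`w ⋆ k`, an integrable function vanishing on `(-∞, 0]` and continuous at `0`, and Fourier
inversion at `0` gives `∫ 𝓕 (w ⋆ k) = (w ⋆ k) 0 = 0`.
-/

open MeasureTheory Set Complex Filter Real Topology
open scoped FourierTransform Convolution

section SupportedOnIoi

variable {f g : ℝ → ℂ}

theorem convolution_mul_eq_zero_of_nonpos (hf0 : ∀ u ≤ 0, f u = 0) (hg0 : ∀ u ≤ 0, g u = 0)
    {s : ℝ} (hs : s ≤ 0) : (f ⋆[ContinuousLinearMap.mul ℂ ℂ] g) s = 0 := by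
  have : ∀ t, f t * g (s - t) = 0 := fun t => by
    rcases le_or_gt t 0 with ht | ht
    · simp [hf0 t ht]
    · simp [hg0 (s - t) (by linarith)]
  simp [convolution_def, this]

theorem norm_convolution_mul_le (hf : Integrable f) (hf0 : ∀ u ≤ 0, f u = 0)
    (hg0 : ∀ u ≤ 0, g u = 0) {C : ℝ} (hgC : ∀ u, ‖g u‖ ≤ C) (s : ℝ) :
    ‖(f ⋆[ContinuousLinearMap.mul ℂ ℂ] g) s‖ ≤ C * ∫ u in Ioc 0 s, ‖f u‖ := by
  have hbound : ∀ t, ‖f t * g (s - t)‖ ≤ (Ioc 0 s).indicator (fun t => C * ‖f t‖) t := by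
    intro t
    by_cases ht : t ∈ Ioc 0 s
    · rw [indicator_of_mem ht, norm_mul, mul_comm]
      exact mul_le_mul_of_nonneg_right (hgC _) (norm_nonneg _)
    · rw [indicator_of_notMem ht]
      rcases le_or_gt t 0 with ht0 | ht0
      · simp [hf0 t ht0]
      · have hst : s < t := by simpa [ht0] using ht
        simp [hg0 (s - t) (by linarith)]
  rw [← integral_const_mul, ← integral_indicator measurableSet_Ioc, convolution_def]
  exact norm_integral_le_of_norm_le ((hf.norm.const_mul C).indicator measurableSet_Ioc)
    (Eventually.of_forall hbound)

theorem tendsto_convolution_mul_nhds_zero (hf : Integrable f) (hf0 : ∀ u ≤ 0, f u = 0)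
    (hg0 : ∀ u ≤ 0, g u = 0) {C : ℝ} (hgC : ∀ u, ‖g u‖ ≤ C) :
    Tendsto (f ⋆[ContinuousLinearMap.mul ℂ ℂ] g) (𝓝 0) (𝓝 0) := by
  refine squeeze_zero_norm (norm_convolution_mul_le hf hf0 hg0 hgC) ?_
  have hvol : Tendsto (fun s : ℝ => volume (Ioc 0 s)) (𝓝 0) (𝓝 0) := by
    simpa using ENNReal.tendsto_ofReal (tendsto_id (x := 𝓝 (0:ℝ)))
  simpa using (hf.norm.tendsto_setIntegral_nhds_zero hvol).const_mul C

theorem integral_fourier_mul_fourier_eq_zero (hf : Integrable f) (hg : Integrable g)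
    (hf0 : ∀ u ≤ 0, f u = 0) (hg0 : ∀ u ≤ 0, g u = 0) {C : ℝ} (hgC : ∀ u, ‖g u‖ ≤ C) :
    ∫ ξ, 𝓕 f ξ * 𝓕 g ξ = 0 := by
  set c := f ⋆[ContinuousLinearMap.mul ℂ ℂ] g
  have hFc : 𝓕 c = fun ξ => 𝓕 f ξ * 𝓕 g ξ := funext (Real.fourier_mul_convolution_eq hf hg)
  have hc0 : c 0 = 0 := convolution_mul_eq_zero_of_nonpos hf0 hg0 le_rfl
  by_cases hint : Integrable fun ξ => 𝓕 f ξ * 𝓕 g ξ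
  · have hcont : ContinuousAt c 0 := by
      rw [ContinuousAt, hc0]
      exact tendsto_convolution_mul_nhds_zero hf hf0 hg0 hgC
    have hinv : 𝓕⁻ (𝓕 c) 0 = c 0 :=
      (hf.integrable_convolution _ hg).fourierInv_fourier_eq (hFc ▸ hint) hcont
    rw [hFc, hc0] at hinv
    simpa [Real.fourierInv_eq] using hinv
  · exact integral_undef hint

end SupportedOnIoi

noncomputable def expKernel (a : ℂ) : ℝ → ℂ := (Ioi 0).indicator fun s => -cexp (a * s)

section ExpKernel

variable {a : ℂ}

theorem expKernel_of_nonpos (a : ℂ) {s : ℝ} (hs : s ≤ 0) : expKernel a s = 0 :=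
  indicator_of_notMem (not_lt.mpr hs) _

theorem norm_expKernel_le_one (ha : a.re ≤ 0) (s : ℝ) : ‖expKernel a s‖ ≤ 1 := by
  rcases le_or_gt s 0 with hs | hs
  · simp [expKernel_of_nonpos a hs]
  · rw [expKernel, indicator_of_mem (mem_Ioi.mpr hs), norm_neg, norm_exp, Real.exp_le_one_iff]
    simpa using mul_nonpos_of_nonpos_of_nonneg ha hs.le

theorem integrable_expKernel (ha : a.re < 0) : Integrable (expKernel a) :=
  (integrableOn_exp_mul_complex_Ioi ha 0).neg.integrable_indicator measurableSet_Ioi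

theorem integral_expKernel (ha : a.re < 0) : ∫ s, expKernel a s = a⁻¹ := by
  rw [expKernel, integral_indicator measurableSet_Ioi, integral_neg,
    integral_exp_mul_complex_Ioi ha 0]
  simp [div_eq_mul_inv]

theorem fourier_expKernel (ha : a.re < 0) (ξ : ℝ) :
    𝓕 (expKernel a) ξ = (a - 2 * π * ξ * I)⁻¹ := by
  have hmod : ∀ s : ℝ, cexp (↑(-2 * π * s * ξ) * I) • expKernel a s
      = expKernel (a - 2 * π * ξ * I) s := by
    intro s
    rcases le_or_gt s 0 with hs | hs
    · simp [expKernel_of_nonpos _ hs]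
    · simp only [expKernel, indicator_of_mem (mem_Ioi.mpr hs), smul_eq_mul, mul_neg,
        ← Complex.exp_add]
      push_cast
      ring_nf
  rw [Real.fourier_real_eq_integral_exp_smul, funext hmod, integral_expKernel (by simpa using ha)]

end ExpKernel

theorem memLp_two_cpow_neg_Ioi_one {s : ℂ} (hs : 1 / 2 < s.re) :
    MemLp (fun x : ℝ => (x : ℂ) ^ (-s)) 2 (volume.restrict (Ioi 1)) := by
  have hcont : ContinuousOn (fun x : ℝ => (x : ℂ) ^ (-s)) (Ioi 1) := fun x hx =>
    ((continuousAt_cpow_const (ofReal_mem_slitPlane.mpr (one_pos.trans hx))).comp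
      continuous_ofReal.continuousAt).continuousWithinAt
  rw [memLp_two_iff_integrable_sq_norm (hcont.aestronglyMeasurable measurableSet_Ioi)]
  refine (integrableOn_Ioi_rpow_of_lt (a := -2 * s.re) (by linarith) one_pos).congr_fun
    (fun x hx => ?_) measurableSet_Ioi
  have hx0 : (0 : ℝ) < x := one_pos.trans hx
  rw [norm_cpow_eq_rpow_re_of_pos hx0, ← Real.rpow_natCast, ← Real.rpow_mul hx0.le]
  simp [mul_comm]

theorem integrableOn_mul_cpow_neg_Ioi_one {v : ℝ → ℂ} (hv : MemLp v 2 (volume.restrict (Ioi 1)))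
    {s : ℂ} (hs : 1 / 2 < s.re) : IntegrableOn (fun x : ℝ => v x * (x : ℂ) ^ (-s)) (Ioi 1) :=
  hv.integrable_mul (memLp_two_cpow_neg_Ioi_one hs)

theorem exp_smul_mul_cpow_neg (v : ℝ → ℂ) (s : ℂ) (u : ℝ) :
    rexp u • (v (rexp u) * ((rexp u : ℝ) : ℂ) ^ (-s)) = cexp ((1 - s) * u) * v (rexp u) := by
  rw [cpow_def_of_ne_zero (by exact_mod_cast (Real.exp_pos u).ne'),
    ← ofReal_log (Real.exp_pos u).le, Real.log_exp, real_smul, ofReal_exp, sub_mul, one_mul,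
    sub_eq_add_neg, Complex.exp_add]
  ring_nf

noncomputable def expPullback (σ : ℝ) (v : ℝ → ℂ) : ℝ → ℂ :=
  (Ioi 0).indicator fun u => cexp ((1 - σ) * u) * v (rexp u)

theorem expPullback_of_nonpos (σ : ℝ) (v : ℝ → ℂ) {u : ℝ} (hu : u ≤ 0) : expPullback σ v u = 0 :=
  indicator_of_notMem (not_lt.mpr hu) _

theorem integrable_expPullback {v : ℝ → ℂ} (hv : MemLp v 2 (volume.restrict (Ioi 1))) {σ : ℝ}
    (hσ : 1 / 2 < σ) : Integrable (expPullback σ v) := by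
  have h := integrableOn_mul_cpow_neg_Ioi_one hv (s := σ) (by simpa using hσ)
  rw [← Real.exp_zero, ← integrableOn_comp_exp_Ioi] at h
  simp only [exp_smul_mul_cpow_neg] at h
  exact h.integrable_indicator measurableSet_Ioi

theorem integral_mul_cpow_neg_Ioi_one_eq_fourier (v : ℝ → ℂ) (σ t : ℝ) :
    ∫ x in Ioi 1, v x * (x : ℂ) ^ (-(σ + I * t)) = 𝓕 (expPullback σ v) (t / (2 * π)) := by
  rw [Real.fourier_real_eq_integral_exp_smul, expPullback, ← Real.exp_zero,
    ← integral_comp_exp_Ioi, ← integral_indicator measurableSet_Ioi]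
  congr 1 with u
  by_cases hu : u ∈ Ioi 0
  · simp only [indicator_of_mem hu, exp_smul_mul_cpow_neg, smul_eq_mul, ← mul_assoc,
      ← Complex.exp_add]
    congr 2
    push_cast
    field_simp
    ring
  · simp [indicator_of_notMem hu]

theorem stmt10_general (v : ℝ → ℂ)
    (hv : MemLp v 2 (volume.restrict (Ioi 0))) :
    (∀ s : ℂ, 1 < s.re → IntegrableOn (fun x : ℝ => v x * (x:ℂ) ^ (-s)) (Ioi 1) volume) ∧
    ∀ Z : ℂ, Z.re = 1/2 →
      ∫ t : ℝ, (∫ x in Ioi (1:ℝ), v x * (x:ℂ) ^ (-(3/2 + I * t))) / (Z - (3/2 + I * t)) = 0 := by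
  have hv1 : MemLp v 2 (volume.restrict (Ioi 1)) :=
    hv.mono_measure (Measure.restrict_mono (Ioi_subset_Ioi zero_le_one) le_rfl)
  refine ⟨fun s hs => integrableOn_mul_cpow_neg_Ioi_one hv1 (by linarith), fun Z hZ => ?_⟩
  set a := Z - 3 / 2
  have ha : a.re < 0 := by simp [a, hZ]; norm_num
  have hfourier : ∀ t : ℝ,
      (∫ x in Ioi (1:ℝ), v x * (x:ℂ) ^ (-(3/2 + I * t))) / (Z - (3/2 + I * t))
        = 𝓕 (expPullback (3 / 2) v) (t / (2 * π)) * 𝓕 (expKernel a) (t / (2 * π)) := by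
    intro t
    rw [← integral_mul_cpow_neg_Ioi_one_eq_fourier, fourier_expKernel ha, div_eq_mul_inv]
    push_cast
    congr 2
    simp only [a]
    field_simp
    ring
  rw [integral_congr_ae (Eventually.of_forall hfourier), Measure.integral_comp_div
    (fun ξ => 𝓕 (expPullback (3 / 2) v) ξ * 𝓕 (expKernel a) ξ),
    integral_fourier_mul_fourier_eq_zero (integrable_expPullback hv1 (by norm_num))
      (integrable_expKernel ha) (fun u => expPullback_of_nonpos _ v)
      (fun u => expKernel_of_nonpos a) (norm_expKernel_le_one ha.le), smul_zero]

/-- Let `v ∈ L²((0,∞))` vanish a.e. on `(0,1)` and set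
`G(s) = ∫_1^∞ v(x) x^{-s} dx`, absolutely convergent for `Re s > 1`. Then for every `Z`
on the critical line, `∫_ℝ G(3/2+it)/(Z − (3/2+it)) dt = 0`. -/
theorem stmt10 (v : ℝ → ℂ)
    (hv : MemLp v 2 (volume.restrict (Ioi 0)))
    (hv0 : ∀ᵐ x ∂volume.restrict (Ioo (0:ℝ) 1), v x = 0) :
    (∀ s : ℂ, 1 < s.re → IntegrableOn (fun x : ℝ => v x * (x:ℂ) ^ (-s)) (Ioi 1) volume) ∧
    ∀ Z : ℂ, Z.re = 1/2 →
      ∫ t : ℝ, (∫ x in Ioi (1:ℝ), v x * (x:ℂ) ^ (-(3/2 + I * t))) / (Z - (3/2 + I * t)) = 0 :=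
  stmt10_general v hv
end

section
/- Let W : ℝ → ℂ be measurable with t ↦ (3/2 + it)·W(t) in L²(ℝ). Then for every Z ∈ ℂ with Re(Z) = 1/2 and Z ≠ 0, the integral ∫_ℝ W(t)/(Z − (3/2 + it)) dt converges absolutely and |(1/2π) ∫_ℝ W(t)/(Z − (3/2 + it)) dt| ≤ (1/|Z|)·(√(1/3) + √(1/2))·√((1/2π) ∫_ℝ |3/2 + it|² |W(t)|² dt). -/
/-!
Write `a t = 3/2 + it`. Since `Re a = 3/2` and `Re (a - Z) = 1` do not vanish, partial fractions
give `W/(Z - a) = Z⁻¹ (aW · a⁻¹ - aW · (a - Z)⁻¹)`, where `a - Z = (3/2 - Z) + it`. A kernel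
`t ↦ (w + it)⁻¹` with `Re w ≠ 0` has squared `L²`-norm the Cauchy integral `π / |Re w|`
(here `2π/3` and `π`), so Cauchy–Schwarz against `aW ∈ L²` bounds each of the two pieces.
-/

open MeasureTheory Complex Filter Real ProbabilityTheory

lemma norm_integral_mul_le_sqrt_mul_sqrt {α 𝕜 : Type*} [MeasurableSpace α] {μ : Measure α}
    [RCLike 𝕜] {f g : α → 𝕜} (hf : MemLp f 2 μ) (hg : MemLp g 2 μ) :
    ‖∫ x, f x * g x ∂μ‖ ≤ √(∫ x, ‖f x‖ ^ 2 ∂μ) * √(∫ x, ‖g x‖ ^ 2 ∂μ) := by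
  have hHolder := integral_mul_norm_le_Lp_mul_Lq HolderConjugate.two_two
    (by simpa using hf) (by simpa using hg)
  simp only [rpow_two, ← sqrt_eq_rpow] at hHolder
  calc ‖∫ x, f x * g x ∂μ‖ ≤ ∫ x, ‖f x * g x‖ ∂μ := norm_integral_le_integral_norm _
    _ = ∫ x, ‖f x‖ * ‖g x‖ ∂μ := by simp only [norm_mul]
    _ ≤ _ := hHolder

lemma integral_inv_sub_sq_add_sq (x₀ : ℝ) {c : ℝ} (hc : c ≠ 0) :
    ∫ x : ℝ, ((x - x₀) ^ 2 + c ^ 2)⁻¹ = π / |c| := by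
  have h := integral_cauchyPDFReal_eq_one x₀ (γ := nnabs c) (by simpa using hc)
  simp only [cauchyPDFReal_def, coe_nnabs, sq_abs, integral_const_mul] at h
  rw [mul_assoc, inv_mul_eq_iff_eq_mul₀ pi_ne_zero, mul_one] at h
  rw [eq_div_iff (abs_ne_zero.mpr hc), mul_comm, h]

lemma integrable_inv_sub_sq_add_sq (x₀ : ℝ) {c : ℝ} (hc : c ≠ 0) :
    Integrable fun x : ℝ => ((x - x₀) ^ 2 + c ^ 2)⁻¹ := by
  have h := (integrable_cauchyPDFReal x₀ (γ := nnabs c)).const_mul (π / |c|)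
  refine h.congr (Eventually.of_forall fun x => ?_)
  have : |c| ≠ 0 := abs_ne_zero.mpr hc
  simp only [cauchyPDFReal_def, coe_nnabs, sq_abs]
  field_simp

lemma sq_norm_add_I_mul (w : ℂ) (t : ℝ) : ‖w + I * t‖ ^ 2 = (t - -w.im) ^ 2 + w.re ^ 2 := by
  simp only [Complex.sq_norm, normSq_apply, add_re, add_im, mul_re, mul_im, I_re, I_im, ofReal_re,
    ofReal_im]
  ring

lemma sq_norm_inv_add_I_mul (w : ℂ) (t : ℝ) :
    ‖(w + I * t)⁻¹‖ ^ 2 = ((t - -w.im) ^ 2 + w.re ^ 2)⁻¹ := by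
  rw [norm_inv, inv_pow, sq_norm_add_I_mul]

lemma memLp_two_inv_add_I_mul {w : ℂ} (hw : w.re ≠ 0) :
    MemLp (fun t : ℝ => (w + I * t)⁻¹) 2 volume := by
  refine (memLp_two_iff_integrable_sq_norm (by fun_prop)).mpr ?_
  simpa only [sq_norm_inv_add_I_mul] using integrable_inv_sub_sq_add_sq (-w.im) hw

lemma integral_sq_norm_inv_add_I_mul {w : ℂ} (hw : w.re ≠ 0) :
    ∫ t : ℝ, ‖(w + I * t)⁻¹‖ ^ 2 = π / |w.re| := by
  simpa only [sq_norm_inv_add_I_mul] using integral_inv_sub_sq_add_sq (-w.im) hw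

lemma norm_integral_mul_inv_add_I_mul_le {F : ℝ → ℂ} (hF : MemLp F 2 volume) {w : ℂ}
    (hw : w.re ≠ 0) :
    ‖∫ t : ℝ, F t * (w + I * t)⁻¹‖ ≤ √(∫ t : ℝ, ‖F t‖ ^ 2) * √(π / |w.re|) := by
  simpa only [integral_sq_norm_inv_add_I_mul hw] using
    norm_integral_mul_le_sqrt_mul_sqrt hF (memLp_two_inv_add_I_mul hw)

lemma add_I_mul_ne_zero {w : ℂ} (hw : w.re ≠ 0) (t : ℝ) : w + I * t ≠ 0 :=
  fun h => hw (by simpa using congrArg re h)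

section Resolvent

variable {W : ℝ → ℂ} {w Z : ℂ}

lemma div_sub_add_I_mul_eq (hw : w.re ≠ 0) (hwZ : (w - Z).re ≠ 0) (hZ : Z ≠ 0) (t : ℝ) :
    W t / (Z - (w + I * t)) =
      Z⁻¹ * ((w + I * t) * W t * (w + I * t)⁻¹ - (w + I * t) * W t * (w - Z + I * t)⁻¹) := by
  have ha := add_I_mul_ne_zero hw t
  have hb := add_I_mul_ne_zero hwZ t
  have hab : Z - (w + I * t) = -(w - Z + I * t) := by ring
  rw [hab]
  field_simp
  ring

variable (hW : MemLp (fun t : ℝ => (w + I * t) * W t) 2 volume) (hw : w.re ≠ 0)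
  (hwZ : (w - Z).re ≠ 0) (hZ : Z ≠ 0)
include hW hw hwZ hZ

lemma integrable_div_sub_add_I_mul : Integrable fun t : ℝ => W t / (Z - (w + I * t)) := by
  have h₁ := hW.integrable_mul (memLp_two_inv_add_I_mul hw)
  have h₂ := hW.integrable_mul (memLp_two_inv_add_I_mul hwZ)
  exact ((h₁.sub h₂).const_mul Z⁻¹).congr
    (Eventually.of_forall fun t => (div_sub_add_I_mul_eq hw hwZ hZ t).symm)

lemma norm_integral_div_sub_add_I_mul_le :
    ‖∫ t : ℝ, W t / (Z - (w + I * t))‖ ≤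
      ‖Z‖⁻¹ * (√(∫ t : ℝ, ‖w + I * t‖ ^ 2 * ‖W t‖ ^ 2) * √(π / |w.re|) +
        √(∫ t : ℝ, ‖w + I * t‖ ^ 2 * ‖W t‖ ^ 2) * √(π / |(w - Z).re|)) := by
  have h₁ : Integrable fun t : ℝ => (w + I * t) * W t * (w + I * t)⁻¹ :=
    hW.integrable_mul (memLp_two_inv_add_I_mul hw)
  have h₂ : Integrable fun t : ℝ => (w + I * t) * W t * (w - Z + I * t)⁻¹ :=
    hW.integrable_mul (memLp_two_inv_add_I_mul hwZ)
  simp only [← mul_pow, ← norm_mul]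
  rw [integral_congr_ae (Eventually.of_forall (div_sub_add_I_mul_eq hw hwZ hZ)),
    integral_const_mul, integral_sub h₁ h₂, norm_mul, norm_inv]
  gcongr
  exact (norm_sub_le _ _).trans (add_le_add (norm_integral_mul_inv_add_I_mul_le hW hw)
    (norm_integral_mul_inv_add_I_mul_le hW hwZ))

end Resolvent

lemma one_div_two_pi_mul_sqrt_add_sqrt (A : ℝ) :
    1 / (2 * π) * (√A * √(π / (3 / 2)) + √A * √π) =
      (√(1 / 3) + √(1 / 2)) * √(1 / (2 * π) * A) := by
  have h₁ : √(1 / (2 * π)) * √(π / (3 / 2)) = √(1 / 3) := by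
    rw [← sqrt_mul (by positivity)]
    congr 1
    field_simp
  have h₂ : √(1 / (2 * π)) * √π = √(1 / 2) := by
    rw [← sqrt_mul (by positivity)]
    congr 1
    field_simp
  rw [sqrt_mul (by positivity), ← h₁, ← h₂]
  nth_rw 1 [← mul_self_sqrt (by positivity : 0 ≤ 1 / (2 * π))]
  ring

theorem stmt11_general (W : ℝ → ℂ)
    (hW : MemLp (fun t : ℝ => (3/2 + I * t) * W t) 2 volume) :
    ∀ Z : ℂ, Z.re = 1/2 → Z ≠ 0 →
      Integrable (fun t : ℝ => W t / (Z - (3/2 + I * t))) volume ∧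
      ‖(1/(2*π) : ℝ) * ∫ t : ℝ, W t / (Z - (3/2 + I * t))‖ ≤
        (1 / ‖Z‖) * (Real.sqrt (1/3) + Real.sqrt (1/2)) *
          Real.sqrt ((1/(2*π)) * ∫ t : ℝ, ‖(3/2 + I * t : ℂ)‖ ^ 2 * ‖W t‖ ^ 2) := by
  intro Z hZre hZ
  have hre₁ : (3/2 : ℂ).re = 3/2 := by norm_num
  have hre₂ : (3/2 - Z).re = 1 := by norm_num [hZre]
  have hw : (3/2 : ℂ).re ≠ 0 := by norm_num [hre₁]
  have hwZ : (3/2 - Z).re ≠ 0 := by norm_num [hre₂]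
  refine ⟨integrable_div_sub_add_I_mul hW hw hwZ hZ, ?_⟩
  have hbound := norm_integral_div_sub_add_I_mul_le hW hw hwZ hZ
  set A := ∫ t : ℝ, ‖(3/2 + I * t : ℂ)‖ ^ 2 * ‖W t‖ ^ 2
  rw [hre₁, hre₂, abs_of_pos (by norm_num), abs_one, div_one] at hbound
  calc _ = 1 / (2 * π) * ‖∫ t : ℝ, W t / (Z - (3/2 + I * t))‖ := by
        rw [norm_mul, norm_real, norm_of_nonneg (by positivity)]
    _ ≤ 1 / (2 * π) * (‖Z‖⁻¹ * (√A * √(π / (3 / 2)) + √A * √π)) := by gcongr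
    _ = _ := by
        rw [mul_left_comm, one_div_two_pi_mul_sqrt_add_sqrt, one_div]
        ring

/-- If `W : ℝ → ℂ` is measurable with `t ↦ (3/2+it)·W(t)` in `L²(ℝ)`,
then for every `Z` on the critical line with `Z ≠ 0` the integral
`∫_ℝ W(t)/(Z − (3/2+it)) dt` converges absolutely and
`|(1/2π)∫_ℝ W(t)/(Z−(3/2+it)) dt| ≤ (1/|Z|)(√(1/3)+√(1/2))·√((1/2π)∫|3/2+it|²|W(t)|² dt)`. -/
theorem stmt11 (W : ℝ → ℂ) (hWm : Measurable W)
    (hW : MemLp (fun t : ℝ => (3/2 + I * t) * W t) 2 volume) :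
    ∀ Z : ℂ, Z.re = 1/2 → Z ≠ 0 →
      Integrable (fun t : ℝ => W t / (Z - (3/2 + I * t))) volume ∧
      ‖(1/(2*π) : ℝ) * ∫ t : ℝ, W t / (Z - (3/2 + I * t))‖ ≤
        (1 / ‖Z‖) * (Real.sqrt (1/3) + Real.sqrt (1/2)) *
          Real.sqrt ((1/(2*π)) * ∫ t : ℝ, ‖(3/2 + I * t : ℂ)‖ ^ 2 * ‖W t‖ ^ 2) :=
  stmt11_general W hW
end

section
/- Let ρ and ρ' be nontrivial zeros of the Riemann zeta function ζ, let m = m_ρ, and let c_0, c_1, c_2, … be the Taylor coefficients at ρ of the analytic function equal to (s−ρ)^m/ζ(s) for s ≠ ρ near ρ (a removable singularity, with c_0 ≠ 0). Let 0 ≤ j < m, let 1 ≤ j' ≤ m_{ρ'}, and let X be the function analytic in a neighborhood of ρ with X(s) = ζ(s)/(s−ρ')^{j'} for s ≠ ρ' (again removing the singularity at ρ' if ρ' = ρ, which is removable since j' ≤ m_{ρ'}). Then Σ_{i=0}^{j} c_{j−i} · X^{(i)}(ρ)/i! equals 1 if ρ' = ρ and j' = m − j, and equals 0 otherwise. (This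 expresses the biorthogonality of the evaluator system to the system of the functions ζ(s)/(s−ρ')^{j'}.) -/
open MeasureTheory Set Complex Filter Real
noncomputable section

/-- `ρ` is a nontrivial zero of the Riemann zeta function. -/
def NontrivialZero (ρ : ℂ) : Prop := riemannZeta ρ = 0 ∧ 0 < ρ.re ∧ ρ.re < 1

/-- The order of vanishing of a function `g : ℂ → ℂ` at a point `ρ`: the least `j`
such that the `j`-th derivative of `g` at `ρ` is nonzero. -/
def ordAt (g : ℂ → ℂ) (ρ : ℂ) : ℕ := sInf {j : ℕ | iteratedDeriv j g ρ ≠ 0}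

/-!
Writing `H = 1/ζ · (s - ρ)^m` and `X = ζ / (s - ρ')^{j'}`, the sum is, by the Leibniz rule, the
`j`-th Taylor coefficient at `ρ` of `X * H`. Since `ζ` has no zeros in a punctured neighbourhood
of `ρ`, the factors of `ζ` cancel there, and by continuity `X * H` agrees near `ρ` with
`(s - ρ)^{m - j'}` if `ρ' = ρ`, whose `j`-th coefficient is `δ_{j, m - j'}`, and otherwise with
`(s - ρ)^m` times a function analytic at `ρ`, whose coefficients below `m > j` vanish.
-/

open scoped Nat Topology

section IteratedDeriv

variable {𝕜 : Type*} [NontriviallyNormedField 𝕜]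

lemma iteratedDeriv_sub_pow_self (k n : ℕ) (z : 𝕜) :
    iteratedDeriv k (fun s => (s - z) ^ n) z = if k = n then (n ! : 𝕜) else 0 := by
  rw [iteratedDeriv_comp_sub_const k (· ^ n) z]
  simpa using (iteratedDeriv_fun_pow_zero : iteratedDeriv k (· ^ n) (0 : 𝕜) = _)

lemma iteratedDeriv_mul_div_factorial [CharZero 𝕜] {n : ℕ} {f g : 𝕜 → 𝕜} {x : 𝕜}
    (hf : ContDiffAt 𝕜 n f x) (hg : ContDiffAt 𝕜 n g x) :
    iteratedDeriv n (fun s => f s * g s) x / n ! =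
      ∑ i ∈ Finset.range (n + 1),
        iteratedDeriv i f x / i ! * (iteratedDeriv (n - i) g x / (n - i)!) := by
  rw [iteratedDeriv_fun_mul hf hg, Finset.sum_div]
  refine Finset.sum_congr rfl fun i hi => ?_
  rw [Nat.cast_choose 𝕜 (Nat.lt_succ_iff.mp (Finset.mem_range.mp hi))]
  field_simp
  rw [mul_assoc, mul_assoc, mul_div_mul_left _ _ (Nat.cast_ne_zero.mpr n.factorial_ne_zero)]

lemma iteratedDeriv_sub_pow_mul_eq_zero {j n : ℕ} {g : 𝕜 → 𝕜} {z : 𝕜}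
    (hg : ContDiffAt 𝕜 j g z) (hjn : j < n) :
    iteratedDeriv j (fun s => (s - z) ^ n * g s) z = 0 := by
  rw [iteratedDeriv_fun_mul (by fun_prop) hg]
  refine Finset.sum_eq_zero fun i hi => ?_
  have hin : i ≠ n := by have := Finset.mem_range.mp hi; omega
  simp [iteratedDeriv_sub_pow_self, hin]

lemma iteratedDeriv_eq_of_eventuallyEq_nhdsNE {F : Type*} [NormedAddCommGroup F]
    [NormedSpace 𝕜 F] {f g : 𝕜 → F} {z : 𝕜} (hf : ContinuousAt f z)
    (hg : ContinuousAt g z) (hfg : f =ᶠ[𝓝[≠] z] g) (n : ℕ) :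
    iteratedDeriv n f z = iteratedDeriv n g z :=
  ((hf.eventuallyEq_nhds_iff_eventuallyEq_nhdsNE hg).mp hfg).iteratedDeriv_eq n

end IteratedDeriv

lemma riemannZeta_eventually_ne_zero_nhdsNE {ρ : ℂ} (hρ : ρ ≠ 1) :
    ∀ᶠ s in 𝓝[≠] ρ, riemannZeta s ≠ 0 := by
  refine (analyticOn_riemannZeta ρ hρ).eventually_eq_zero_or_eventually_ne_zero.resolve_left
    fun hzero => riemannZeta_ne_zero_of_one_lt_re (s := 2) (by norm_num) ?_
  exact analyticOn_riemannZeta.eqOn_zero_of_preconnected_of_eventuallyEq_zero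
    (isConnected_compl_singleton_of_one_lt_rank (by simp) 1).isPreconnected hρ hzero
    (by norm_num : (2 : ℂ) ≠ 1)

theorem stmt14_general (ρ ρ' : ℂ) (hρ : NontrivialZero ρ)
    (m : ℕ) (hm : m = ordAt riemannZeta ρ)
    (H : ℂ → ℂ) (hH : AnalyticAt ℂ H ρ)
    (hHeq : ∀ᶠ s in nhdsWithin ρ {ρ}ᶜ, H s = (s - ρ) ^ m / riemannZeta s)
    (c : ℕ → ℂ) (hc : ∀ k : ℕ, c k = iteratedDeriv k H ρ / (k.factorial : ℂ))
    (j j' : ℕ) (hj : j < m) (hj'2 : j' ≤ ordAt riemannZeta ρ')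
    (X : ℂ → ℂ) (hX : AnalyticAt ℂ X ρ)
    (hXeq : ∀ᶠ s in nhds ρ, s ≠ ρ' → X s = riemannZeta s / (s - ρ') ^ j') :
    ∑ i ∈ Finset.range (j + 1), c (j - i) * (iteratedDeriv i X ρ / (i.factorial : ℂ)) =
      if ρ' = ρ ∧ j' = m - j then 1 else 0 := by
  have hρ1 : ρ ≠ 1 := by rintro rfl; simp [NontrivialZero] at hρ
  have hXH : ∀ᶠ s in 𝓝[≠] ρ, s ≠ ρ' → X s * H s = (s - ρ) ^ m / (s - ρ') ^ j' := by
    filter_upwards [hHeq, riemannZeta_eventually_ne_zero_nhdsNE hρ1, nhdsWithin_le_nhds hXeq]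
      with s hHs hζs hXs hsρ'
    rw [hXs hsρ', hHs]
    field_simp
  have hcont : ContinuousAt (fun s => X s * H s) ρ := hX.continuousAt.mul hH.continuousAt
  have hsum : ∑ i ∈ Finset.range (j + 1), c (j - i) * (iteratedDeriv i X ρ / i !) =
      iteratedDeriv j (fun s => X s * H s) ρ / (j ! : ℂ) := by
    rw [iteratedDeriv_mul_div_factorial hX.contDiffAt hH.contDiffAt]
    exact Finset.sum_congr rfl fun i _ => by rw [hc, mul_comm]
  rw [hsum]
  rcases eq_or_ne ρ' ρ with rfl | hne
  · have hloc : (fun s => X s * H s) =ᶠ[𝓝[≠] ρ'] fun s => (s - ρ') ^ (m - j') := by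
      filter_upwards [hXH, self_mem_nhdsWithin] with s hs hsρ'
      rw [hs hsρ', pow_sub₀ _ (sub_ne_zero.mpr hsρ') (hm ▸ hj'2), div_eq_mul_inv]
    rw [iteratedDeriv_eq_of_eventuallyEq_nhdsNE hcont (by fun_prop) hloc,
      iteratedDeriv_sub_pow_self]
    by_cases hjj : j = m - j'
    · rw [if_pos hjj, if_pos ⟨rfl, by omega⟩, hjj, div_self (by simp [Nat.factorial_ne_zero])]
    · rw [if_neg hjj, if_neg fun h => hjj (by omega), zero_div]
  · have hg : AnalyticAt ℂ (fun s => ((s - ρ') ^ j')⁻¹) ρ :=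
      (by fun_prop : AnalyticAt ℂ (fun s => (s - ρ') ^ j') ρ).inv
        (pow_ne_zero _ (sub_ne_zero.mpr hne.symm))
    have hloc : (fun s => X s * H s) =ᶠ[𝓝[≠] ρ] fun s => (s - ρ) ^ m * ((s - ρ') ^ j')⁻¹ := by
      filter_upwards [hXH, nhdsWithin_le_nhds (eventually_ne_nhds hne.symm)] with s hs hsρ'
      rw [hs hsρ', div_eq_mul_inv]
    rw [iteratedDeriv_eq_of_eventuallyEq_nhdsNE hcont
        (g := fun s => (s - ρ) ^ m * ((s - ρ') ^ j')⁻¹)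
        ((by fun_prop : ContinuousAt (fun s => (s - ρ) ^ m) ρ).mul hg.continuousAt) hloc,
      iteratedDeriv_sub_pow_mul_eq_zero hg.contDiffAt hj, if_neg fun h => hne h.1, zero_div]

/-- Let `ρ, ρ'` be nontrivial zeros of `ζ`, `m = m_ρ`, and let
`c_0, c_1, …` be the Taylor coefficients at `ρ` of the analytic function equal to
`(s−ρ)^m/ζ(s)` for `s ≠ ρ` near `ρ`.  Let `0 ≤ j < m`, `1 ≤ j' ≤ m_{ρ'}`, and let `X` be
analytic near `ρ` with `X(s) = ζ(s)/(s−ρ')^{j'}` for `s ≠ ρ'`.  Then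
`Σ_{i=0}^{j} c_{j−i}·X^{(i)}(ρ)/i!` equals `1` if `ρ' = ρ` and `j' = m − j`, and `0`
otherwise. -/
theorem stmt14 (ρ ρ' : ℂ) (hρ : NontrivialZero ρ) (hρ' : NontrivialZero ρ')
    (m : ℕ) (hm : m = ordAt riemannZeta ρ)
    (H : ℂ → ℂ) (hH : AnalyticAt ℂ H ρ)
    (hHeq : ∀ᶠ s in nhdsWithin ρ {ρ}ᶜ, H s = (s - ρ) ^ m / riemannZeta s)
    (c : ℕ → ℂ) (hc : ∀ k : ℕ, c k = iteratedDeriv k H ρ / (k.factorial : ℂ))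
    (j j' : ℕ) (hj : j < m) (hj'1 : 1 ≤ j') (hj'2 : j' ≤ ordAt riemannZeta ρ')
    (X : ℂ → ℂ) (hX : AnalyticAt ℂ X ρ)
    (hXeq : ∀ᶠ s in nhds ρ, s ≠ ρ' → X s = riemannZeta s / (s - ρ') ^ j') :
    ∑ i ∈ Finset.range (j + 1), c (j - i) * (iteratedDeriv i X ρ / (i.factorial : ℂ)) =
      if ρ' = ρ ∧ j' = m - j then 1 else 0 :=
  stmt14_general ρ ρ' hρ m hm H hH hHeq c hc j j' hj hj'2 X hX hXeq
end
end

section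
/- Let U ⊆ ℂ be open, let h and F be analytic on U, let ρ ∈ U be a zero of h of finite order m ≥ 1, and let Z ∈ U with Z ≠ ρ. Let c_0, c_1, c_2, … be the Taylor coefficients at ρ of the analytic function equal to (s−ρ)^m/h(s) near ρ (removable singularity at ρ). Then for all sufficiently small r > 0, (1/(2πi)) ∮_{|s−ρ|=r} F(s)/(h(s)·(Z−s)) ds = Σ_{j=0}^{m−1} Σ_{i=0}^{j} c_{j−i} · (F^{(i)}(ρ)/i!) · (Z−ρ)^{−(m−j)}, where the contour is the positively oriented circle of radius r centered at ρ. (This is the residue at ρ of F(s)/(h(s)(Z−s)) expressed through the evaluators F ↦ F^{(i)}(ρ).) -/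
/-!
Near `ρ` the integrand is `G s / (s - ρ) ^ m` with `G s = F s * H s * (Z - s)⁻¹` holomorphic, so
Cauchy's integral formula for derivatives turns the integral into the `(m - 1)`-st Taylor
coefficient of `G` at `ρ`. By the Leibniz rule Taylor coefficients of a product are the Cauchy
product of those of the factors, and the `k`-th Taylor coefficient of `(Z - s)⁻¹` at `ρ` is
`(Z - ρ) ^ (-(k + 1))`.
-/

open MeasureTheory Set Complex Filter Real
noncomputable section

open Topology Metric

section TaylorCoeff

variable {𝕜 : Type*} [NontriviallyNormedField 𝕜] [CharZero 𝕜]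

def taylorCoeff (f : 𝕜 → 𝕜) (x : 𝕜) (n : ℕ) : 𝕜 :=
  iteratedDeriv n f x / n.factorial

theorem taylorCoeff_mul {f g : 𝕜 → 𝕜} {x : 𝕜} {n : ℕ} (hf : ContDiffAt 𝕜 n f x)
    (hg : ContDiffAt 𝕜 n g x) :
    taylorCoeff (fun s => f s * g s) x n =
      ∑ i ∈ Finset.range (n + 1), taylorCoeff f x i * taylorCoeff g x (n - i) := by
  rw [taylorCoeff, iteratedDeriv_fun_mul hf hg, Finset.sum_div]
  refine Finset.sum_congr rfl fun i hi => ?_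
  have hin : i ≤ n := Nat.lt_succ_iff.mp (Finset.mem_range.mp hi)
  have hchoose : (n.choose i : 𝕜) ≠ 0 := by exact_mod_cast (Nat.choose_pos hin).ne'
  rw [taylorCoeff, taylorCoeff, ← Nat.choose_mul_factorial_mul_factorial hin]
  push_cast
  field_simp

theorem taylorCoeff_inv_const_sub (Z x : 𝕜) (k : ℕ) :
    taylorCoeff (fun s => (Z - s)⁻¹) x k = (Z - x) ^ (-(k + 1 : ℤ)) := by
  have h := congr_fun (iter_deriv_inv_linear_sub k (-1 : 𝕜) (-Z)) x
  simp only [neg_one_mul, sub_neg_eq_add, neg_add_eq_sub] at h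
  have hsign : ((-1) ^ k * (-1) ^ k : 𝕜) = 1 := by rw [← mul_pow]; simp
  have hfac : (k.factorial : 𝕜) ≠ 0 := by exact_mod_cast k.factorial_ne_zero
  calc taylorCoeff (fun s => (Z - s)⁻¹) x k
      = ((-1) ^ k * (-1) ^ k) * (k.factorial / k.factorial) * (Z - x) ^ (-1 - k : ℤ) := by
        rw [taylorCoeff, iteratedDeriv_eq_iterate, h]; ring
    _ = (Z - x) ^ (-(k + 1 : ℤ)) := by rw [hsign, div_self hfac]; ring_nf

theorem taylorCoeff_mul_mul_inv_const_sub {f g : 𝕜 → 𝕜} {x Z : 𝕜} {n : ℕ}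
    (hf : ContDiffAt 𝕜 n f x) (hg : ContDiffAt 𝕜 n g x) (hxZ : x ≠ Z) :
    taylorCoeff (fun s => f s * g s * (Z - s)⁻¹) x n =
      ∑ j ∈ Finset.range (n + 1), ∑ i ∈ Finset.range (j + 1),
        taylorCoeff g x (j - i) * taylorCoeff f x i * (Z - x) ^ (-((n + 1 - j : ℕ) : ℤ)) := by
  have hW : ContDiffAt 𝕜 n (fun s => (Z - s)⁻¹) x :=
    (contDiffAt_const.sub contDiffAt_id).inv (sub_ne_zero.mpr hxZ.symm)
  rw [taylorCoeff_mul (hf.mul hg) hW]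
  refine Finset.sum_congr rfl fun j hj => ?_
  have hjn : j ≤ n := Nat.lt_succ_iff.mp (Finset.mem_range.mp hj)
  have hjn' : (j : WithTop ℕ∞) ≤ n := by exact_mod_cast hjn
  rw [taylorCoeff_mul (hf.of_le hjn') (hg.of_le hjn'), Finset.sum_mul, taylorCoeff_inv_const_sub,
    Nat.sub_add_comm hjn]
  refine Finset.sum_congr rfl fun i _ => ?_
  push_cast
  ring

end TaylorCoeff

theorem DifferentiableOn.circleIntegral_div_sub_center_pow_eq_taylorCoeff {G : ℂ → ℂ} {c : ℂ}
    {R : ℝ} (hR : 0 < R) (hG : DifferentiableOn ℂ G (closedBall c R)) (n : ℕ) :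
    (1 / (2 * π * I)) * ∮ z in C(c, R), G z / (z - c) ^ (n + 1) = taylorCoeff G c n := by
  have h := hG.circleIntegral_one_div_sub_center_pow_smul hR n
  simp only [smul_eq_mul, one_div_mul_eq_div] at h
  rw [h, taylorCoeff]
  field_simp [two_pi_I_ne_zero]

theorem div_mul_eq_of_eq_pow_div {K : Type*} [Field K] {h F H w a : K} {m : ℕ} (ha : a ≠ 0)
    (hH : H = a ^ m / h) : F / (h * w) = F * H * w⁻¹ / a ^ m := by
  rcases eq_or_ne h 0 with h0 | h0
  · simp [hH, h0]
  · rw [hH]; field_simp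

theorem stmt15_general (U : Set ℂ) (hU : IsOpen U) (h F : ℂ → ℂ)
    (hF : AnalyticOnNhd ℂ F U)
    (ρ : ℂ) (hρ : ρ ∈ U) (m : ℕ) (hm1 : 1 ≤ m)
    (Z : ℂ) (hZρ : Z ≠ ρ)
    (H : ℂ → ℂ) (hH : AnalyticAt ℂ H ρ)
    (hHeq : ∀ᶠ s in nhdsWithin ρ {ρ}ᶜ, H s = (s - ρ) ^ m / h s)
    (c : ℕ → ℂ) (hc : ∀ k : ℕ, c k = iteratedDeriv k H ρ / (k.factorial : ℂ)) :
    ∃ r₀ : ℝ, 0 < r₀ ∧ ∀ r : ℝ, 0 < r → r < r₀ →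
      (1/(2*π*I)) * (∮ s in C(ρ, r), F s / (h s * (Z - s))) =
        ∑ j ∈ Finset.range m, ∑ i ∈ Finset.range (j + 1),
          c (j - i) * (iteratedDeriv i F ρ / (i.factorial : ℂ)) *
            (Z - ρ) ^ (-((m - j : ℕ) : ℤ)) := by
  obtain ⟨n, rfl⟩ : ∃ n, m = n + 1 := ⟨m - 1, by omega⟩
  set G : ℂ → ℂ := fun s => F s * H s * (Z - s)⁻¹
  have hnear : ∀ᶠ s in 𝓝 ρ, AnalyticAt ℂ G s ∧
      (s ≠ ρ → F s / (h s * (Z - s)) = G s / (s - ρ) ^ (n + 1)) := by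
    filter_upwards [hU.mem_nhds hρ, hH.eventually_analyticAt, eventually_ne_nhds hZρ.symm,
      eventually_nhdsWithin_iff.mp hHeq] with s hsU hHs hsZ hHs_eq
    refine ⟨((hF s hsU).mul hHs).mul ?_,
      fun hsρ => div_mul_eq_of_eq_pow_div (sub_ne_zero.mpr hsρ) (hHs_eq hsρ)⟩
    exact (analyticAt_const.sub analyticAt_id).inv (sub_ne_zero.mpr hsZ.symm)
  obtain ⟨r₀, hr₀, hball⟩ := Metric.nhds_basis_closedBall.eventually_iff.mp hnear
  refine ⟨r₀, hr₀, fun r hr hrr₀ => ?_⟩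
  have hsub : closedBall ρ r ⊆ closedBall ρ r₀ := closedBall_subset_closedBall hrr₀.le
  calc (1/(2*π*I)) * (∮ s in C(ρ, r), F s / (h s * (Z - s)))
      = (1/(2*π*I)) * ∮ s in C(ρ, r), G s / (s - ρ) ^ (n + 1) := by
        congr 1
        refine circleIntegral.integral_congr hr.le fun s hs => ?_
        exact (hball (hsub (sphere_subset_closedBall hs))).2 (ne_of_mem_sphere hs hr.ne')
    _ = taylorCoeff G ρ n :=
        DifferentiableOn.circleIntegral_div_sub_center_pow_eq_taylorCoeff hr
          (fun s hs => (hball (hsub hs)).1.differentiableAt.differentiableWithinAt) n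
    _ = _ := by
        rw [taylorCoeff_mul_mul_inv_const_sub (hF ρ hρ).contDiffAt hH.contDiffAt hZρ.symm]
        simp only [hc]
        rfl

/-- Let `h, F` be analytic on an open set `U`, let `ρ ∈ U` be a zero of
`h` of finite order `m ≥ 1`, let `Z ∈ U`, `Z ≠ ρ`, and let `c_0, c_1, …` be the Taylor
coefficients at `ρ` of the analytic function equal to `(s−ρ)^m/h(s)` near `ρ`.  Then for
all sufficiently small `r > 0`,
`(1/2πi)∮_{|s−ρ|=r} F(s)/(h(s)(Z−s)) ds
  = Σ_{j=0}^{m−1} Σ_{i=0}^{j} c_{j−i}·(F^{(i)}(ρ)/i!)·(Z−ρ)^{−(m−j)}`. -/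
theorem stmt15 (U : Set ℂ) (hU : IsOpen U) (h F : ℂ → ℂ)
    (hh : AnalyticOnNhd ℂ h U) (hF : AnalyticOnNhd ℂ F U)
    (ρ : ℂ) (hρ : ρ ∈ U) (m : ℕ) (hm1 : 1 ≤ m)
    (hvan : ∀ j : ℕ, j < m → iteratedDeriv j h ρ = 0)
    (hnz : iteratedDeriv m h ρ ≠ 0)
    (Z : ℂ) (hZ : Z ∈ U) (hZρ : Z ≠ ρ)
    (H : ℂ → ℂ) (hH : AnalyticAt ℂ H ρ)
    (hHeq : ∀ᶠ s in nhdsWithin ρ {ρ}ᶜ, H s = (s - ρ) ^ m / h s)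
    (c : ℕ → ℂ) (hc : ∀ k : ℕ, c k = iteratedDeriv k H ρ / (k.factorial : ℂ)) :
    ∃ r₀ : ℝ, 0 < r₀ ∧ ∀ r : ℝ, 0 < r → r < r₀ →
      (1/(2*π*I)) * (∮ s in C(ρ, r), F s / (h s * (Z - s))) =
        ∑ j ∈ Finset.range m, ∑ i ∈ Finset.range (j + 1),
          c (j - i) * (iteratedDeriv i F ρ / (i.factorial : ℂ)) *
            (Z - ρ) ^ (-((m - j : ℕ) : ℤ)) :=
  stmt15_general U hU h F hF ρ hρ m hm1 Z hZρ H hH hHeq c hc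

end
end
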